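/- If two real-valued functions θ₁ and θ₂ are real-analytic on a connected open set U ⊆ ℝⁿ and satisfy cos(θ₁(x)) = cos(θ₂(x)) for all x ∈ U, then either θ₁(x) = θ₂(x) + 2lπ for all x ∈ U, or θ₁(x) = -θ₂(x) + 2lπ for all x ∈ U, for some integer l. -/

import Mathlib

/-!
Since `cos θ₁ - cos θ₂ = -2 sin ((θ₁ + θ₂) / 2) sin ((θ₁ - θ₂) / 2)`, the product of the two
analytic functions `sin ((θ₁ ± θ₂) / 2)` vanishes on `U`; by the identity theorem one factor
vanishes identically on the connected open set `U`. Then `θ₁ + θ₂` or `θ₁ - θ₂` is a continuous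
function with values in the countable set `2πℤ`, hence constant on `U`.
-/

open Filter Set Topology Real

theorem AnalyticOnNhd.eqOn_zero_or_eqOn_zero_of_mul_eq_zero {𝕜 E : Type*}
    [NontriviallyNormedField 𝕜] [NormedAddCommGroup E] [NormedSpace 𝕜 E]
    {f g : E → 𝕜} {U : Set E} (hUopen : IsOpen U) (hU : IsPreconnected U)
    (hf : AnalyticOnNhd 𝕜 f U) (hg : AnalyticOnNhd 𝕜 g U) (hfg : ∀ x ∈ U, f x * g x = 0) :
    EqOn f 0 U ∨ EqOn g 0 U := by
  by_cases hloc : ∃ z ∈ U, f =ᶠ[𝓝 z] 0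
  · obtain ⟨z, hz, hfz⟩ := hloc
    exact .inl (hf.eqOn_zero_of_preconnected_of_eventuallyEq_zero hU hz hfz)
  refine .inr fun z hz => ?_
  have hf_ne : ∃ᶠ y in 𝓝 z, f y ≠ 0 := not_eventually.mp fun h => hloc ⟨z, hz, h⟩
  -- `g` vanishes wherever `f` does not, and such points accumulate at `z`.
  have hg_zero : ∃ᶠ y in 𝓝 z, g y ∈ ({0} : Set 𝕜) :=
    (hf_ne.and_eventually (hUopen.mem_nhds hz)).mono fun y ⟨hfy, hyU⟩ =>
      (mul_eq_zero.mp (hfg y hyU)).resolve_left hfy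
  exact ((hg z hz).continuousAt.tendsto.frequently hg_zero).mem_of_closed isClosed_singleton

theorem IsPreconnected.eqOn_const_of_mapsTo_countable {X Y : Type*} [TopologicalSpace X]
    [MetricSpace Y] {U : Set X} (hU : IsPreconnected U) {f : X → Y} (hf : ContinuousOn f U)
    {T : Set Y} (hT : T.Countable) (hfT : MapsTo f U T) {x₀ : X} (hx₀ : x₀ ∈ U) :
    ∀ x ∈ U, f x = f x₀ := fun _ hx =>
  hT.isTotallyDisconnected _ hfT.image_subset (hU.image f hf) (mem_image_of_mem f hx)
    (mem_image_of_mem f hx₀)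

theorem IsPreconnected.exists_int_eqOn_of_sin_half_eq_zero {X : Type*} [TopologicalSpace X]
    {U : Set X} (hU : IsPreconnected U) {d : X → ℝ} (hd : ContinuousOn d U)
    (hsin : ∀ x ∈ U, sin (d x / 2) = 0) : ∃ l : ℤ, ∀ x ∈ U, d x = 2 * l * π := by
  have hmem : MapsTo d U (range fun m : ℤ => 2 * m * π) := fun x hx => by
    obtain ⟨m, hm⟩ := sin_eq_zero_iff.mp (hsin x hx)
    exact ⟨m, by linarith⟩
  rcases U.eq_empty_or_nonempty with rfl | ⟨x₀, hx₀⟩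
  · exact ⟨0, by simp⟩
  obtain ⟨l, hl⟩ := hmem hx₀
  exact ⟨l, fun x hx =>
    (hU.eqOn_const_of_mapsTo_countable hd (countable_range _) hmem hx₀ x hx).trans hl.symm⟩

theorem stmt_0_general {n : ℕ} (U : Set (Fin n → ℝ)) (hUopen : IsOpen U)
    (hUconn : IsConnected U) (θ₁ θ₂ : (Fin n → ℝ) → ℝ)
    (h₁ : AnalyticOnNhd ℝ θ₁ U) (h₂ : AnalyticOnNhd ℝ θ₂ U)
    (hcos : ∀ x ∈ U, Real.cos (θ₁ x) = Real.cos (θ₂ x)) :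
    ∃ l : ℤ, (∀ x ∈ U, θ₁ x = θ₂ x + 2 * l * Real.pi) ∨
      (∀ x ∈ U, θ₁ x = -θ₂ x + 2 * l * Real.pi) := by
  have hsin_half {d : (Fin n → ℝ) → ℝ} (hd : AnalyticOnNhd ℝ d U) :
      AnalyticOnNhd ℝ (fun x => sin (d x / 2)) U := fun x hx =>
    analyticAt_sin.comp ((hd x hx).div analyticAt_const two_ne_zero)
  have hprod : ∀ x ∈ U, sin ((θ₁ x + θ₂ x) / 2) * sin ((θ₁ x - θ₂ x) / 2) = 0 := by
    intro x hx
    have h := cos_sub_cos (θ₁ x) (θ₂ x)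
    rw [hcos x hx, sub_self] at h
    linarith
  rcases (hsin_half (h₁.add h₂)).eqOn_zero_or_eqOn_zero_of_mul_eq_zero hUopen
    hUconn.isPreconnected (hsin_half (h₁.sub h₂)) hprod with hsum | hdiff
  · obtain ⟨l, hl⟩ := hUconn.isPreconnected.exists_int_eqOn_of_sin_half_eq_zero
      (d := fun x => θ₁ x + θ₂ x) (h₁.continuousOn.add h₂.continuousOn) hsum
    exact ⟨l, .inr fun x hx => by linarith [hl x hx]⟩
  · obtain ⟨l, hl⟩ := hUconn.isPreconnected.exists_int_eqOn_of_sin_half_eq_zero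
      (d := fun x => θ₁ x - θ₂ x) (h₁.continuousOn.sub h₂.continuousOn) hdiff
    exact ⟨l, .inl fun x hx => by linarith [hl x hx]⟩

/-- If two real-valued functions θ₁, θ₂ are real-analytic on a nonempty
connected open set U ⊆ ℝⁿ and cos θ₁ = cos θ₂ on U, then either θ₁ = θ₂ + 2lπ on U or
θ₁ = -θ₂ + 2lπ on U for some integer l. -/
theorem stmt_0 {n : ℕ} (U : Set (Fin n → ℝ)) (hUopen : IsOpen U) (hUne : U.Nonempty)
    (hUconn : IsConnected U) (θ₁ θ₂ : (Fin n → ℝ) → ℝ)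
    (h₁ : AnalyticOnNhd ℝ θ₁ U) (h₂ : AnalyticOnNhd ℝ θ₂ U)
    (hcos : ∀ x ∈ U, Real.cos (θ₁ x) = Real.cos (θ₂ x)) :
    ∃ l : ℤ, (∀ x ∈ U, θ₁ x = θ₂ x + 2 * l * Real.pi) ∨
      (∀ x ∈ U, θ₁ x = -θ₂ x + 2 * l * Real.pi) :=
  stmt_0_general U hUopen hUconn θ₁ θ₂ h₁ h₂ hcos
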